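/- Worst-case deviation of a softmax-weighted average with fixed and free coordinates (abstract form of Lemma 4.9 / Lemma 5.5 on attention): Let 𝒳 be a nonempty set, n ≥ 2, m ≥ 1, and let F ⊆ {1, …, n} be nonempty with nonempty complement. Suppose there are fixed reals (c_i)_{i ∈ F}, fixed vectors (u_i)_{i ∈ F} in ℝ^m, and a constant V_max ≥ 0 such that: for each X ∈ 𝒳 there are logits ℓ(X) ∈ ℝ^n with ℓ(X)_i = c_i for all i ∈ F, and value vectors v(X)_1, …, v(X)_n ∈ ℝ^m with v(X)_i = u_i for all i ∈ F and ‖v(X)_j‖_∞ ≤ V_max for all j ∈ {1, …, n}. Let p(X) := softmax(ℓ(X)), and suppose constants β_fix^min ≤ β_fix^max and β_free^max satisfy, for every X ∈ 𝒳: β_fix^min ≤ Σ_{i ∈ F} p(X)_i ≤ β_fix^max and Σ_{j ∉ F} p(X)_j ≤ β_free^max. Then for all X, X' ∈ 𝒳, ‖ Σ_{i=1}^n p(X)_i v(X)_i − Σ_{i=1}^n p(X')_i v(X')_i ‖_∞ ≤ (β_fix^max − β_fix^min) · max_{i ∈ F} ‖u_i‖_∞ + 2 β_free^max · V_max. -/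
import Mathlib


/-- `softmax ℓ i = exp (ℓ i) / ∑ k, exp (ℓ k)`. -/
noncomputable def softmax {n : ℕ} (ℓ : Fin n → ℝ) (i : Fin n) : ℝ :=
  Real.exp (ℓ i) / ∑ k, Real.exp (ℓ k)

/-- Worst-case deviation of a softmax-weighted average with fixed (`F`) and free
(`Fᶜ`) coordinates: if the logits and value vectors at positions in `F` are
independent of the input `X`, all value vectors are bounded by `Vmax` in the sup
norm, and the softmax mass on `F` lies in `[βfixmin, βfixmax]` while the mass on
`Fᶜ` is at most `βfreemax`, then for all `X, X'`,
`‖Σ_i p(X)_i v(X)_i − Σ_i p(X')_i v(X')_i‖_∞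
  ≤ (βfixmax − βfixmin) · max_{i ∈ F} ‖u i‖_∞ + 2 βfreemax · Vmax`.
(The norm on `Fin m → ℝ` is the sup norm.) -/
theorem wcDev_softmax_weighted_avg {X : Type*} [Nonempty X] {n m : ℕ}
    (hn : 2 ≤ n) (hm : 1 ≤ m)
    (F : Finset (Fin n)) (hF : F.Nonempty) (hFc : F ≠ Finset.univ)
    (c : Fin n → ℝ) (u : Fin n → Fin m → ℝ) (Vmax : ℝ) (hVmax : 0 ≤ Vmax)
    (ℓ : X → Fin n → ℝ) (v : X → Fin n → Fin m → ℝ)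
    (hℓ : ∀ x, ∀ i ∈ F, ℓ x i = c i)
    (hv : ∀ x, ∀ i ∈ F, v x i = u i)
    (hvb : ∀ x, ∀ j, ‖v x j‖ ≤ Vmax)
    (βfixmin βfixmax βfreemax : ℝ) (hββ : βfixmin ≤ βfixmax)
    (hfix_lo : ∀ x, βfixmin ≤ ∑ i ∈ F, softmax (ℓ x) i)
    (hfix_hi : ∀ x, ∑ i ∈ F, softmax (ℓ x) i ≤ βfixmax)
    (hfree_hi : ∀ x, ∑ j ∈ Fᶜ, softmax (ℓ x) j ≤ βfreemax) :
    ∀ x x' : X,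
      ‖(∑ i, softmax (ℓ x) i • v x i) - ∑ i, softmax (ℓ x') i • v x' i‖ ≤
        (βfixmax - βfixmin) * (F.sup' hF fun i => ‖u i‖) + 2 * βfreemax * Vmax := by
  intro x x'
  have hnpos : 0 < n := lt_of_lt_of_le (by norm_num) hn
  set M := F.sup' hF fun i => ‖u i‖ with hM
  have hM0 : 0 ≤ M := by
    obtain ⟨i, hi⟩ := hF
    exact le_trans (norm_nonneg (u i)) (Finset.le_sup' (fun i => ‖u i‖) hi)
  have hS : ∀ y : X, 0 < ∑ k, Real.exp (ℓ y k) :=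
    fun y => Finset.sum_pos (fun k _ => Real.exp_pos _) ⟨⟨0, hnpos⟩, Finset.mem_univ _⟩
  have hp0 : ∀ (y : X) j, 0 ≤ softmax (ℓ y) j := fun y j =>
    div_nonneg (Real.exp_pos _).le (hS y).le
  set E := ∑ i ∈ F, Real.exp (c i) with hE
  have hEpos : 0 < E := Finset.sum_pos (fun i _ => Real.exp_pos _) hF
  set W : Fin m → ℝ := ∑ i ∈ F, Real.exp (c i) • u i with hW
  have hWn : ‖W‖ ≤ E * M := by
    calc ‖W‖ ≤ ∑ i ∈ F, ‖Real.exp (c i) • u i‖ := norm_sum_le _ _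
      _ ≤ ∑ i ∈ F, Real.exp (c i) * M := by
          apply Finset.sum_le_sum
          intro i hi
          rw [norm_smul, Real.norm_eq_abs, abs_of_pos (Real.exp_pos _)]
          exact mul_le_mul_of_nonneg_left (Finset.le_sup' (fun i => ‖u i‖) hi) (Real.exp_pos _).le
      _ = E * M := by rw [hE, Finset.sum_mul]
  have hfixed : ∀ y : X, (∑ i ∈ F, softmax (ℓ y) i • v y i)
      = (∑ k, Real.exp (ℓ y k))⁻¹ • W := by
    intro y
    rw [hW, Finset.smul_sum]
    refine Finset.sum_congr rfl fun i hi => ?_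
    rw [hv y i hi, smul_smul]
    congr 1
    rw [softmax, hℓ y i hi, div_eq_inv_mul, mul_comm]
  have hs : ∀ y : X, (∑ i ∈ F, softmax (ℓ y) i) = (∑ k, Real.exp (ℓ y k))⁻¹ * E := by
    intro y
    rw [hE, Finset.mul_sum]
    refine Finset.sum_congr rfl fun i hi => ?_
    rw [softmax, hℓ y i hi, div_eq_inv_mul, mul_comm]
  have hfree : ∀ y : X, ‖∑ j ∈ Fᶜ, softmax (ℓ y) j • v y j‖ ≤ βfreemax * Vmax := by
    intro y
    calc ‖∑ j ∈ Fᶜ, softmax (ℓ y) j • v y j‖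
        ≤ ∑ j ∈ Fᶜ, ‖softmax (ℓ y) j • v y j‖ := norm_sum_le _ _
      _ ≤ ∑ j ∈ Fᶜ, softmax (ℓ y) j * Vmax := by
          apply Finset.sum_le_sum
          intro j _
          rw [norm_smul, Real.norm_eq_abs, abs_of_nonneg (hp0 y j)]
          exact mul_le_mul_of_nonneg_left (hvb y j) (hp0 y j)
      _ = (∑ j ∈ Fᶜ, softmax (ℓ y) j) * Vmax := (Finset.sum_mul _ _ _).symm
      _ ≤ βfreemax * Vmax := mul_le_mul_of_nonneg_right (hfree_hi y) hVmax
  have hsplit : ∀ y : X, (∑ i, softmax (ℓ y) i • v y i)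
      = (∑ k, Real.exp (ℓ y k))⁻¹ • W + ∑ j ∈ Fᶜ, softmax (ℓ y) j • v y j := by
    intro y
    rw [← hfixed y, Finset.sum_add_sum_compl]
  rw [hsplit x, hsplit x']
  have key : ‖((∑ k, Real.exp (ℓ x k))⁻¹ - (∑ k, Real.exp (ℓ x' k))⁻¹) • W‖
      ≤ (βfixmax - βfixmin) * M := by
    rw [norm_smul, Real.norm_eq_abs]
    calc |(∑ k, Real.exp (ℓ x k))⁻¹ - (∑ k, Real.exp (ℓ x' k))⁻¹| * ‖W‖
        ≤ |(∑ k, Real.exp (ℓ x k))⁻¹ - (∑ k, Real.exp (ℓ x' k))⁻¹| * (E * M) :=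
          mul_le_mul_of_nonneg_left hWn (abs_nonneg _)
      _ = |(∑ k, Real.exp (ℓ x k))⁻¹ * E - (∑ k, Real.exp (ℓ x' k))⁻¹ * E| * M := by
          rw [← sub_mul, abs_mul, abs_of_pos hEpos, mul_assoc]
      _ ≤ (βfixmax - βfixmin) * M := by
          refine mul_le_mul_of_nonneg_right ?_ hM0
          rw [← hs x, ← hs x', abs_sub_le_iff]
          constructor <;> linarith [hfix_lo x, hfix_hi x, hfix_lo x', hfix_hi x']
  have hdec : ‖((∑ k, Real.exp (ℓ x k))⁻¹ • W + ∑ j ∈ Fᶜ, softmax (ℓ x) j • v x j)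
      - ((∑ k, Real.exp (ℓ x' k))⁻¹ • W + ∑ j ∈ Fᶜ, softmax (ℓ x') j • v x' j)‖
      ≤ ‖((∑ k, Real.exp (ℓ x k))⁻¹ - (∑ k, Real.exp (ℓ x' k))⁻¹) • W‖
        + (‖∑ j ∈ Fᶜ, softmax (ℓ x) j • v x j‖
          + ‖∑ j ∈ Fᶜ, softmax (ℓ x') j • v x' j‖) := by
    rw [sub_smul]
    calc ‖((∑ k, Real.exp (ℓ x k))⁻¹ • W + ∑ j ∈ Fᶜ, softmax (ℓ x) j • v x j)
        - ((∑ k, Real.exp (ℓ x' k))⁻¹ • W + ∑ j ∈ Fᶜ, softmax (ℓ x') j • v x' j)‖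
        = ‖((∑ k, Real.exp (ℓ x k))⁻¹ • W - (∑ k, Real.exp (ℓ x' k))⁻¹ • W)
          + ((∑ j ∈ Fᶜ, softmax (ℓ x) j • v x j)
            - ∑ j ∈ Fᶜ, softmax (ℓ x') j • v x' j)‖ := by ring_nf
      _ ≤ _ := by
          refine le_trans (norm_add_le _ _) (add_le_add le_rfl (norm_sub_le _ _))
  calc _ ≤ _ := hdec
    _ ≤ (βfixmax - βfixmin) * M + 2 * βfreemax * Vmax := by
        have := hfree x; have := hfree x'
        linarith [key]
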